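/- Let p and p̃ be distinct prime numbers and let d, e, d̃, ẽ be integers with d² − d·e + e² = p and d̃² − d̃·ẽ + ẽ² = p̃. Then there is no ℚ-algebra isomorphism from ℚ[x,y]/(x³, y·(y + d̃·x)·(y + ẽ·x)) to ℚ[x,y]/(x³, y·(y + d·x)·(y + e·x)) mapping the ℚ-span of the classes of x and y onto the ℚ-span of the classes of x and y. -/

import Mathlib

noncomputable section

open MvPolynomial

/-- The relations ideal for `ℚ[x,y]/(x³, y·(y+d·x)·(y+e·x))`. -/
def Qrel (d e : ℤ) : Ideal (MvPolynomial (Fin 2) ℚ) :=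
  Ideal.span {X 0 ^ 3, X 1 * (X 1 + (d : ℚ) • X 0) * (X 1 + (e : ℚ) • X 0)}

/-- `QR d e = ℚ[x,y]/(x³, y·(y+d·x)·(y+e·x))`. -/
abbrev QR (d e : ℤ) := MvPolynomial (Fin 2) ℚ ⧸ Qrel d e

/-- The class of `x` in `QR d e`. -/
def qx (d e : ℤ) : QR d e := Ideal.Quotient.mk (Qrel d e) (X 0)

/-- The class of `y` in `QR d e`. -/
def qy (d e : ℤ) : QR d e := Ideal.Quotient.mk (Qrel d e) (X 1)

/-- The `ℚ`-span of the classes of `x` and `y` (the degree-2 part). -/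
def qdeg2 (d e : ℤ) : Submodule ℚ (QR d e) := Submodule.span ℚ {qx d e, qy d e}

/-! The roots `0, −d, −e` (in `y/x`) of the relation `y(y+dx)(y+ex)` have the quadratic invariant
`d² − de + e²` (half the sum of their squared differences). It does not see multiples of `x³`,
and a substitution `x ↦ a x, y ↦ α x + β y` multiplies it by the square `(a/β)²`. Since the
degree-3 part of the relation ideal is spanned by `x³` and `y(y+dx)(y+ex)`, a vanishing product
of three linear forms with common `y`-coefficient `v` has invariant `v²(d² − de + e²)`. For
`φ(x)³ = 0` this forces `φ(x) = a x`, and then the image of the relation gives `p̃ a² = p β²`,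
impossible as `p p̃` is not a square. -/

namespace MvPolynomial

variable {σ R : Type*} [CommSemiring R] {g u P : MvPolynomial σ R} {n m : ℕ}

theorem isHomogeneous_smul_X (c : R) (i : σ) : (c • X i : MvPolynomial σ R).IsHomogeneous 1 :=
  Submodule.smul_mem (homogeneousSubmodule σ R 1) c (isHomogeneous_X R i)

attribute [local instance] gradedAlgebra

theorem homogeneousComponent_mul_of_isHomogeneous (hg : g.IsHomogeneous n) (u : MvPolynomial σ R) :
    homogeneousComponent n (u * g) = C (coeff 0 u) * g := by
  have := DirectSum.coe_decompose_mul_of_right_mem_of_le (homogeneousSubmodule σ R) (a := u)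
    (show g ∈ homogeneousSubmodule σ R n from hg) le_rfl
  rw [Nat.sub_self] at this
  rw [← decomposition.decompose'_apply, ← homogeneousComponent_zero,
    ← decomposition.decompose'_apply]
  exact this

theorem homogeneousComponent_mul_eq_zero_of_lt (hg : g.IsHomogeneous n) (u : MvPolynomial σ R)
    (hm : m < n) : homogeneousComponent m (u * g) = 0 := by
  rw [← decomposition.decompose'_apply]
  exact DirectSum.coe_decompose_mul_of_right_mem_of_not_le (homogeneousSubmodule σ R)
    (show g ∈ homogeneousSubmodule σ R n from hg) (by omega)

variable {s : Set (MvPolynomial σ R)}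

theorem homogeneousComponent_mem_span_of_mem_ideal_span (hs : ∀ g ∈ s, g.IsHomogeneous n)
    (hP : P ∈ Ideal.span s) : homogeneousComponent n P ∈ Submodule.span R s := by
  obtain ⟨k, f, g, rfl⟩ := Submodule.mem_span_set'.mp hP
  simp only [map_sum, smul_eq_mul, homogeneousComponent_mul_of_isHomogeneous (hs _ (g _).2),
    ← smul_eq_C_mul]
  exact Submodule.sum_mem _ fun i _ ↦ Submodule.smul_mem _ _ (Submodule.subset_span (g i).2)

theorem homogeneousComponent_eq_zero_of_mem_ideal_span (hs : ∀ g ∈ s, g.IsHomogeneous n)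
    (hP : P ∈ Ideal.span s) (hm : m < n) : homogeneousComponent m P = 0 := by
  obtain ⟨k, f, g, rfl⟩ := Submodule.mem_span_set'.mp hP
  simp only [map_sum, smul_eq_mul, homogeneousComponent_mul_eq_zero_of_lt (hs _ (g _).2) _ hm,
    Finset.sum_const_zero]

end MvPolynomial

theorem LinearIndependent.ne_zero_of_injective_of_map_pair {R M N : Type*} [CommRing R]
    [Nontrivial R] [AddCommGroup M] [Module R M] [AddCommGroup N] [Module R N] {x y : M}
    (hxy : LinearIndependent R ![x, y]) {f : M →ₗ[R] N} (hf : Function.Injective f)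
    {x' y' : N} {a α β : R} (hx : f x = a • x') (hy : f y = α • x' + β • y') : β ≠ 0 := by
  rintro rfl
  have h0 : α • x + (-a) • y = 0 := hf (by
    rw [map_zero, map_add, map_smul, map_smul, hx, hy]
    module)
  obtain rfl : a = 0 := neg_eq_zero.mp (LinearIndependent.pair_iff.mp hxy _ _ h0).2
  exact hxy.ne_zero 0 (hf (by simpa using hx))

theorem Nat.Prime.eq_zero_of_mul_sq_eq_mul_sq {p q : ℕ} (hp : p.Prime) (hq : q.Prime) (hpq : p ≠ q)
    {a b : ℚ} (h : (p : ℚ) * b ^ 2 = q * a ^ 2) : b = 0 := by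
  by_contra hb
  have hsq : IsSquare ((p * q : ℕ) : ℚ) := ⟨q * a / b, by
    field_simp
    push_cast
    linear_combination (q : ℚ) * h⟩
  obtain ⟨m, hm⟩ := Rat.isSquare_natCast_iff.mp hsq
  have hsf : Squarefree (p * q) :=
    (Nat.squarefree_mul ((Nat.coprime_primes hp hq).mpr hpq)).mpr ⟨hp.squarefree, hq.squarefree⟩
  have hm1 : m = 1 := Nat.isUnit_iff.mp (hsf m (hm ▸ dvd_rfl))
  subst hm1
  exact hp.ne_one (Nat.eq_one_of_mul_eq_one_right hm)

section

variable {d e : ℤ} {F : MvPolynomial (Fin 2) ℚ}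

theorem Qrel_generators_isHomogeneous (d e : ℤ) :
    ∀ g ∈ ({X 0 ^ 3, X 1 * (X 1 + (d : ℚ) • X 0) * (X 1 + (e : ℚ) • X 0)} :
      Set (MvPolynomial (Fin 2) ℚ)), g.IsHomogeneous 3 := by
  have hlin (c : ℚ) : (X 1 + c • X 0 : MvPolynomial (Fin 2) ℚ).IsHomogeneous 1 :=
    (isHomogeneous_X ℚ 1).add (isHomogeneous_smul_X c 0)
  rintro g (rfl | rfl)
  · exact isHomogeneous_X_pow 0 3
  · exact ((isHomogeneous_X ℚ 1).mul (hlin _)).mul (hlin _)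

theorem eq_zero_of_isHomogeneous_one_of_mem_Qrel (hF : F.IsHomogeneous 1)
    (h : F ∈ Qrel d e) : F = 0 := by
  rw [← homogeneousComponent_eq_self hF]
  exact homogeneousComponent_eq_zero_of_mem_ideal_span (Qrel_generators_isHomogeneous d e) h
    (by norm_num)

theorem exists_eq_of_isHomogeneous_three_of_mem_Qrel (hF : F.IsHomogeneous 3)
    (h : F ∈ Qrel d e) : ∃ k₁ k₂ : ℚ,
      k₁ • X 0 ^ 3 + k₂ • (X 1 * (X 1 + (d : ℚ) • X 0) * (X 1 + (e : ℚ) • X 0)) = F := by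
  rw [← Submodule.mem_span_pair, ← homogeneousComponent_eq_self hF]
  exact homogeneousComponent_mem_span_of_mem_ideal_span (Qrel_generators_isHomogeneous d e) h

theorem mkₐ_X_zero (d e : ℤ) : Ideal.Quotient.mkₐ ℚ (Qrel d e) (X 0) = qx d e := rfl

theorem mkₐ_X_one (d e : ℤ) : Ideal.Quotient.mkₐ ℚ (Qrel d e) (X 1) = qy d e := rfl

theorem linearIndependent_qx_qy (d e : ℤ) : LinearIndependent ℚ ![qx d e, qy d e] := by
  refine LinearIndependent.pair_iff.mpr fun s t hst ↦ ?_
  rw [← mkₐ_X_zero, ← mkₐ_X_one, ← map_smul, ← map_smul, ← map_add, Ideal.Quotient.mkₐ_eq_mk,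
    Ideal.Quotient.eq_zero_iff_mem] at hst
  have hF := eq_zero_of_isHomogeneous_one_of_mem_Qrel
    ((isHomogeneous_smul_X s 0).add (isHomogeneous_smul_X t 1)) hst
  exact ⟨by simpa using congrArg (eval ![1, 0]) hF, by simpa using congrArg (eval ![0, 1]) hF⟩

theorem qx_pow_three_eq_zero (d e : ℤ) : qx d e ^ 3 = 0 := by
  rw [qx, ← map_pow, Ideal.Quotient.eq_zero_iff_mem]
  exact Ideal.subset_span (Set.mem_insert _ _)

theorem qy_mul_qy_add_smul_mul_qy_add_smul_eq_zero (d e : ℤ) :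
    qy d e * (qy d e + (d : ℚ) • qx d e) * (qy d e + (e : ℚ) • qx d e) = 0 := by
  have hmem : X 1 * (X 1 + (d : ℚ) • X 0) * (X 1 + (e : ℚ) • X 0) ∈ Qrel d e :=
    Ideal.subset_span (Set.mem_insert_of_mem _ rfl)
  rw [← Ideal.Quotient.eq_zero_iff_mem, ← Ideal.Quotient.mkₐ_eq_mk ℚ] at hmem
  simpa only [map_mul, map_add, map_smul, mkₐ_X_zero, mkₐ_X_one] using hmem

theorem sum_sq_sub_mul_eq_of_mul_mul_eq_zero {u₁ u₂ u₃ v : ℚ}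
    (h : (u₁ • qx d e + v • qy d e) * (u₂ • qx d e + v • qy d e) *
      (u₃ • qx d e + v • qy d e) = 0) :
    v ^ 4 * (u₁ ^ 2 + u₂ ^ 2 + u₃ ^ 2 - u₁ * u₂ - u₁ * u₃ - u₂ * u₃) =
      v ^ 6 * (d ^ 2 - d * e + e ^ 2) := by
  set ℓ : ℚ → MvPolynomial (Fin 2) ℚ := fun u ↦ u • X 0 + v • X 1
  have hℓ (u : ℚ) : (ℓ u).IsHomogeneous 1 :=
    (isHomogeneous_smul_X u 0).add (isHomogeneous_smul_X v 1)
  have hmem : ℓ u₁ * ℓ u₂ * ℓ u₃ ∈ Qrel d e := by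
    rw [← Ideal.Quotient.eq_zero_iff_mem, ← Ideal.Quotient.mkₐ_eq_mk ℚ]
    simpa only [ℓ, map_mul, map_add, map_smul, mkₐ_X_zero, mkₐ_X_one] using h
  obtain ⟨k₁, k₂, hk⟩ :=
    exists_eq_of_isHomogeneous_three_of_mem_Qrel (((hℓ u₁).mul (hℓ u₂)).mul (hℓ u₃)) hmem
  have hev (t₀ t₁ : ℚ) : k₁ * t₀ ^ 3 + k₂ * (t₁ * (t₁ + d * t₀) * (t₁ + e * t₀)) =
      (u₁ * t₀ + v * t₁) * (u₂ * t₀ + v * t₁) * (u₃ * t₀ + v * t₁) := by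
    simpa [ℓ] using congrArg (eval ![t₀, t₁]) hk
  have hxy2 : v ^ 2 * (u₁ + u₂ + u₃) = v ^ 3 * (d + e) := by
    linear_combination (-1 / 2) * (hev 1 1 + hev 1 (-1)) + hev 1 0 + (d + e) * hev 0 1
  have hx2y : v * (u₁ * u₂ + u₁ * u₃ + u₂ * u₃) = v ^ 3 * (d * e) := by
    linear_combination (-1 / 2) * (hev 1 1 - hev 1 (-1)) + (1 + d * e) * hev 0 1
  linear_combination (v ^ 2 * (u₁ + u₂ + u₃) + v ^ 3 * (d + e)) * hxy2 - 3 * v ^ 3 * hx2y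

theorem eq_zero_of_smul_qx_add_smul_qy_pow_three_eq_zero {a b : ℚ}
    (hde : (d ^ 2 - d * e + e ^ 2 : ℚ) ≠ 0) (h : (a • qx d e + b • qy d e) ^ 3 = 0) : b = 0 := by
  have h := sum_sq_sub_mul_eq_of_mul_mul_eq_zero (u₁ := a) (u₂ := a) (u₃ := a) (v := b)
    (by rwa [← pow_three'])
  have h' : b ^ 6 * (d ^ 2 - d * e + e ^ 2 : ℚ) = 0 := by linear_combination -h
  simpa [hde] using h'

theorem pow_four_mul_eq_of_map_qx_qy {dt et : ℤ} (φ : QR dt et →ₐ[ℚ] QR d e) {a α β : ℚ}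
    (hx : φ (qx dt et) = a • qx d e) (hy : φ (qy dt et) = α • qx d e + β • qy d e) :
    β ^ 4 * (a ^ 2 * (dt ^ 2 - dt * et + et ^ 2)) = β ^ 6 * (d ^ 2 - d * e + e ^ 2) := by
  have h := congrArg φ (qy_mul_qy_add_smul_mul_qy_add_smul_eq_zero dt et)
  rw [map_zero, map_mul, map_mul, map_add, map_add, map_smul, map_smul, hx, hy] at h
  have hshift (c : ℚ) : α • qx d e + β • qy d e + c • a • qx d e =
      (α + c * a) • qx d e + β • qy d e := by
    module
  simp only [hshift] at h
  linear_combination sum_sq_sub_mul_eq_of_mul_mul_eq_zero h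

end

/-- If `p ≠ p̃` are primes with `d² − d·e + e² = p` and
`d̃² − d̃·ẽ + ẽ² = p̃`, then there is no `ℚ`-algebra isomorphism
`ℚ[x,y]/(x³, y(y+d̃x)(y+ẽx)) ≃ ℚ[x,y]/(x³, y(y+dx)(y+ex))` mapping the span of `x, y`
onto the span of `x, y`. -/
theorem stmt11 (p pt : ℕ) (hp : p.Prime) (hpt : pt.Prime) (hne : p ≠ pt)
    (d e dt et : ℤ) (hde : d ^ 2 - d * e + e ^ 2 = (p : ℤ))
    (hdet : dt ^ 2 - dt * et + et ^ 2 = (pt : ℤ)) :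
    ¬ ∃ φ : QR dt et ≃ₐ[ℚ] QR d e,
        Submodule.map φ.toLinearMap (qdeg2 dt et) = qdeg2 d e := by
  rintro ⟨φ, hφ⟩
  have hmem {z : QR dt et} (hz : z ∈ qdeg2 dt et) : φ z ∈ qdeg2 d e :=
    hφ ▸ Submodule.mem_map_of_mem hz
  obtain ⟨a, b, hx⟩ :=
    Submodule.mem_span_pair.mp (hmem (Submodule.subset_span (Set.mem_insert _ _)))
  obtain ⟨α, β, hy⟩ :=
    Submodule.mem_span_pair.mp (hmem (Submodule.subset_span (Set.mem_insert_of_mem _ rfl)))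
  have hdeQ : (d ^ 2 - d * e + e ^ 2 : ℚ) = p := by exact_mod_cast hde
  have hdetQ : (dt ^ 2 - dt * et + et ^ 2 : ℚ) = pt := by exact_mod_cast hdet
  have hb : b = 0 := eq_zero_of_smul_qx_add_smul_qy_pow_three_eq_zero
    (hdeQ ▸ Nat.cast_ne_zero.mpr hp.ne_zero) (by rw [hx, ← map_pow, qx_pow_three_eq_zero, map_zero])
  rw [hb, zero_smul, add_zero] at hx
  have hβ : β ≠ 0 := (linearIndependent_qx_qy dt et).ne_zero_of_injective_of_map_pair
    (f := φ.toLinearMap) φ.injective hx.symm hy.symm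
  have h := pow_four_mul_eq_of_map_qx_qy φ.toAlgHom hx.symm hy.symm
  rw [hdeQ, hdetQ] at h
  have hkey : (p : ℚ) * β ^ 2 = pt * a ^ 2 :=
    mul_left_cancel₀ (pow_ne_zero 4 hβ) (by linear_combination -h)
  exact hβ (hp.eq_zero_of_mul_sq_eq_mul_sq hpt hne hkey)
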